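/- arXiv:1611.09765 — 2 statements merged into one kernel-verified Lean document; each statement's English description precedes it below -/
import Mathlib

section
/- Let S ∈ L¹_loc[0,∞) be such that there is a constant C with S(u) - S(y) ≥ -C e^u for all u ≥ y ≥ 0, S(x) ≥ 0, and suppose the Laplace transform ∫₀^∞ e^{-sx} S(x) dx converges for all real s > 1. Then for each fixed σ > 1, S(x) = o(e^{σx}) as x → ∞. -/
open MeasureTheory Filter

theorem stmt1 (S : ℝ → ℝ) (C : ℝ)
    (hloc : LocallyIntegrableOn S (Set.Ici 0))
    (hdec : ∀ u y : ℝ, 0 ≤ y → y ≤ u → S u - S y ≥ -C * Real.exp u)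
    (hpos : ∀ x : ℝ, 0 ≤ S x)
    (hconv : ∀ s : ℝ, 1 < s →
      ∃ L : ℝ, Tendsto (fun R => ∫ x in (0:ℝ)..R, Real.exp (-s * x) * S x) atTop (nhds L)) :
    ∀ σ : ℝ, 1 < σ →
      Tendsto (fun x => Real.exp (-σ * x) * S x) atTop (nhds 0) := by
  intro σ hσ
  set C₀ : ℝ := max C 0 with hC₀def
  have hC₀ : 0 ≤ C₀ := le_max_right _ _
  have hdec' : ∀ u y : ℝ, 0 ≤ y → y ≤ u → S y - C₀ * Real.exp u ≤ S u := by
    intro u y hy hyu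
    have h := hdec u y hy hyu
    have hCle : C ≤ C₀ := le_max_left _ _
    nlinarith [Real.exp_pos u]
  set s : ℝ := (1 + σ) / 2 with hsdef
  have hs1 : 1 < s := by rw [hsdef]; linarith
  have hsσ : s < σ := by rw [hsdef]; linarith
  have hs0 : 0 < s := by linarith
  -- integrability of the integrand on intervals in [0, ∞)
  have hIntOn : ∀ a b : ℝ, 0 ≤ a →
      IntegrableOn (fun u => Real.exp (-s * u) * S u) (Set.Ioc a b) volume := by
    intro a b ha
    have hS : IntegrableOn S (Set.Icc a b) volume :=
      hloc.integrableOn_compact_subset (fun x hx => le_trans ha hx.1) isCompact_Icc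
    have hS' : IntegrableOn S (Set.Ioc a b) volume := hS.mono_set Set.Ioc_subset_Icc_self
    have hmeas : AEStronglyMeasurable (fun u => Real.exp (-s * u) * S u)
        (volume.restrict (Set.Ioc a b)) :=
      ((Real.continuous_exp.comp (continuous_const.mul continuous_id)).aestronglyMeasurable).mul
        hS'.aestronglyMeasurable
    refine (hS'.const_mul (Real.exp (-s * a))).mono' hmeas ?_
    rw [ae_restrict_iff' measurableSet_Ioc]
    filter_upwards with u hu
    have h1 : Real.exp (-s * u) ≤ Real.exp (-s * a) :=
      Real.exp_le_exp.mpr (by nlinarith [hu.1.le])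
    have h2 := hpos u
    rw [Real.norm_eq_abs, abs_of_nonneg (mul_nonneg (Real.exp_pos _).le h2)]
    exact mul_le_mul_of_nonneg_right h1 h2
  have hII : ∀ a b : ℝ, 0 ≤ a → a ≤ b →
      IntervalIntegrable (fun u => Real.exp (-s * u) * S u) volume a b := fun a b ha hab =>
    (intervalIntegrable_iff_integrableOn_Ioc_of_le hab).mpr (hIntOn a b ha)
  rw [NormedAddCommGroup.tendsto_nhds_zero]
  intro ε hε
  by_contra hcon
  have hfreq : ∃ᶠ x in atTop, ε ≤ Real.exp (-σ * x) * S x := by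
    rw [Filter.not_eventually] at hcon
    refine hcon.mono fun x hx => ?_
    have hnn : 0 ≤ Real.exp (-σ * x) * S x := mul_nonneg (Real.exp_pos _).le (hpos x)
    rw [Real.norm_eq_abs, abs_of_nonneg hnn] at hx
    linarith [not_lt.mp hx]
  obtain ⟨L, hF⟩ := hconv s hs1
  have hdiff : Tendsto (fun x : ℝ => (∫ t in (0:ℝ)..(x + 1), Real.exp (-s * t) * S t)
      - ∫ t in (0:ℝ)..x, Real.exp (-s * t) * S t) atTop (nhds 0) := by
    have h₁ := hF.comp (tendsto_atTop_add_const_right atTop (1 : ℝ) tendsto_id)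
    simpa using h₁.sub hF
  have hev1 : ∀ᶠ x : ℝ in atTop, (∫ t in (0:ℝ)..(x + 1), Real.exp (-s * t) * S t)
      - (∫ t in (0:ℝ)..x, Real.exp (-s * t) * S t) < 1 :=
    hdiff.eventually_lt_const (by norm_num)
  -- eventual bound (b): C₀ * exp (x+1) ≤ ε/2 * exp (σ x)
  have hb : ∀ᶠ x : ℝ in atTop, C₀ * Real.exp (x + 1) ≤ ε / 2 * Real.exp (σ * x) := by
    have h1 : Tendsto (fun x : ℝ => ε / 2 * Real.exp ((σ - 1) * x + -1)) atTop atTop :=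
      Tendsto.const_mul_atTop (by linarith) (Real.tendsto_exp_atTop.comp
        (tendsto_atTop_add_const_right atTop (-1) (Tendsto.const_mul_atTop (by linarith)
          tendsto_id)))
    filter_upwards [h1.eventually_ge_atTop C₀] with x hx
    have hkey : Real.exp ((σ - 1) * x + -1) * Real.exp (x + 1) = Real.exp (σ * x) := by
      rw [← Real.exp_add]; ring_nf
    have hx' := mul_le_mul_of_nonneg_right hx (Real.exp_pos (x + 1)).le
    calc C₀ * Real.exp (x + 1) ≤ ε / 2 * Real.exp ((σ - 1) * x + -1) * Real.exp (x + 1) := hx'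
      _ = ε / 2 * Real.exp (σ * x) := by rw [mul_assoc, hkey]
  -- eventual bound (c): 1 ≤ exp (-s (x+1)) * (ε/2 * exp (σ x))
  have hc : ∀ᶠ x : ℝ in atTop,
      1 ≤ Real.exp (-s * (x + 1)) * (ε / 2 * Real.exp (σ * x)) := by
    have h2 : Tendsto (fun x : ℝ => ε / 2 * Real.exp ((σ - s) * x + -s)) atTop atTop :=
      Tendsto.const_mul_atTop (by linarith) (Real.tendsto_exp_atTop.comp
        (tendsto_atTop_add_const_right atTop (-s) (Tendsto.const_mul_atTop (by linarith)
          tendsto_id)))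
    filter_upwards [h2.eventually_ge_atTop 1] with x hx
    have hkey : Real.exp (-s * (x + 1)) * Real.exp (σ * x) = Real.exp ((σ - s) * x + -s) := by
      rw [← Real.exp_add]; ring_nf
    calc (1 : ℝ) ≤ ε / 2 * Real.exp ((σ - s) * x + -s) := hx
      _ = Real.exp (-s * (x + 1)) * (ε / 2 * Real.exp (σ * x)) := by
          rw [← hkey]; ring
  obtain ⟨x, hx_freq, hx0, hxb, hxc, hxlt⟩ :=
    (hfreq.and_eventually ((eventually_ge_atTop (0 : ℝ)).and (hb.and (hc.and hev1)))).exists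
  -- S x ≥ ε * exp (σ x)
  have hone : Real.exp (-σ * x) * Real.exp (σ * x) = 1 := by
    rw [← Real.exp_add]; norm_num
  have hSx : ε * Real.exp (σ * x) ≤ S x := by
    have h := mul_le_mul_of_nonneg_right hx_freq (Real.exp_pos (σ * x)).le
    nlinarith [Real.exp_pos (σ * x), hpos x]
  -- pointwise lower bound on [x, x+1]
  have hpt : ∀ u ∈ Set.Icc x (x + 1),
      Real.exp (-s * (x + 1)) * (ε / 2 * Real.exp (σ * x)) ≤ Real.exp (-s * u) * S u := by
    intro u hu
    have hd := hdec' u x hx0 hu.1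
    have hexpu : Real.exp u ≤ Real.exp (x + 1) := Real.exp_le_exp.mpr hu.2
    have hCu : C₀ * Real.exp u ≤ C₀ * Real.exp (x + 1) :=
      mul_le_mul_of_nonneg_left hexpu hC₀
    have hSu : ε / 2 * Real.exp (σ * x) ≤ S u := by linarith
    have hexps : Real.exp (-s * (x + 1)) ≤ Real.exp (-s * u) :=
      Real.exp_le_exp.mpr (by nlinarith [hu.2])
    exact mul_le_mul hexps hSu (by positivity) (Real.exp_pos _).le
  -- integral bounds
  have hIx : IntervalIntegrable (fun u => Real.exp (-s * u) * S u) volume 0 x :=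
    hII 0 x le_rfl hx0
  have hIx1 : IntervalIntegrable (fun u => Real.exp (-s * u) * S u) volume x (x + 1) :=
    hII x (x + 1) hx0 (by linarith)
  have hadd := intervalIntegral.integral_add_adjacent_intervals hIx hIx1
  have hlow : Real.exp (-s * (x + 1)) * (ε / 2 * Real.exp (σ * x))
      ≤ ∫ u in x..(x + 1), Real.exp (-s * u) * S u := by
    have h := intervalIntegral.integral_mono_on (by linarith : x ≤ x + 1)
      intervalIntegrable_const hIx1 hpt
    simpa using h
  linarith
end

section
/- Let Δ : ℝ → ℝ be bounded and measurable, and suppose that for every Schwartz function φ on ℝ one has ∫ Δ(x+h) φ(x) dx → a ∫ φ(x) dx as h → ∞. Suppose moreover that Δ is log-linearly slowly decreasing in the sense that, setting S(x) = e^x Δ(x), for each ε > 0 there exist δ > 0 and x₀ with S(x+h) - S(x) ≥ -ε e^x for 0 ≤ h ≤ δ and x ≥ x₀. Then Δ(h) → a as h → ∞. -/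
open MeasureTheory Filter

/-- A smooth compactly supported function is a Schwartz function. -/
noncomputable def mySchwartz (f : ℝ → ℝ) (hf : ContDiff ℝ ((⊤ : ℕ∞) : WithTop ℕ∞) f) (hsupp : HasCompactSupport f) :
    SchwartzMap ℝ ℝ where
  toFun := f
  smooth' := hf
  decay' := by
    intro k n
    have hcont : Continuous fun x : ℝ => ‖x‖ ^ k * ‖iteratedFDeriv ℝ n f x‖ :=
      (continuous_norm.pow k).mul (hf.continuous_iteratedFDeriv (by exact_mod_cast le_top)).norm
    have hcs : HasCompactSupport fun x : ℝ => ‖x‖ ^ k * ‖iteratedFDeriv ℝ n f x‖ := by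
      apply (hsupp.iteratedFDeriv (𝕜 := ℝ) n).mono
      intro x hx
      simp only [Function.mem_support, ne_eq] at hx ⊢
      intro h0
      exact hx (by rw [h0]; simp)
    obtain ⟨C, hC⟩ := hcs.exists_bound_of_continuous hcont
    exact ⟨C, fun x => (le_abs_self _).trans (hC x)⟩

@[simp] lemma mySchwartz_apply (f : ℝ → ℝ) (hf : ContDiff ℝ ((⊤ : ℕ∞) : WithTop ℕ∞) f) (hsupp : HasCompactSupport f)
    (x : ℝ) : mySchwartz f hf hsupp x = f x := rfl

theorem stmt4 (Δ : ℝ → ℝ) (a B : ℝ)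
    (hmeas : Measurable Δ) (hbd : ∀ x, |Δ x| ≤ B)
    (hweak : ∀ φ : SchwartzMap ℝ ℝ,
      Tendsto (fun h : ℝ => ∫ x : ℝ, Δ (x + h) * φ x) atTop (nhds (a * ∫ x : ℝ, φ x)))
    (hsd : ∀ ε > 0, ∃ δ > 0, ∃ x₀ : ℝ, ∀ x : ℝ, x₀ ≤ x → ∀ h : ℝ, 0 ≤ h → h ≤ δ →
      Real.exp (x + h) * Δ (x + h) - Real.exp x * Δ x ≥ -ε * Real.exp x) :
    Tendsto Δ atTop (nhds a) := by
  have hB : 0 ≤ B := (abs_nonneg _).trans (hbd 0)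
  -- classical slow decrease
  have hsd' : ∀ ε > (0:ℝ), ∃ δ > (0:ℝ), ∃ x₀ : ℝ, ∀ x : ℝ, x₀ ≤ x → ∀ h : ℝ, 0 ≤ h → h ≤ δ →
      Δ (x + h) ≥ Δ x - ε := by
    intro ε hε
    obtain ⟨δ₁, hδ₁, x₀, H⟩ := hsd (ε/2) (by linarith)
    refine ⟨min δ₁ (ε/(2*(B+1))), lt_min hδ₁ (by positivity), x₀, ?_⟩
    intro x hx h h0 hδ
    have hd1 : h ≤ δ₁ := hδ.trans (min_le_left _ _)
    have hd2 : h ≤ ε/(2*(B+1)) := hδ.trans (min_le_right _ _)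
    have key := H x hx h h0 hd1
    have hexh : (0:ℝ) < Real.exp (x + h) := Real.exp_pos _
    have h1 : Real.exp (-h) * (Δ x - ε/2) ≤ Δ (x + h) := by
      have h3 : Real.exp (x + h) * (Real.exp (-h) * (Δ x - ε/2)) ≤
          Real.exp (x + h) * Δ (x + h) := by
        have h2 : Real.exp (x + h) * Real.exp (-h) = Real.exp x := by
          rw [← Real.exp_add]; ring_nf
        rw [← mul_assoc, h2]
        nlinarith
      exact le_of_mul_le_mul_left h3 hexh
    have he1 : Real.exp (-h) ≤ 1 := Real.exp_le_one_iff.mpr (by linarith)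
    have he2 : 1 - h ≤ Real.exp (-h) := by
      have := Real.add_one_le_exp (-h); linarith
    have hΔ := abs_le.mp (hbd x)
    have hh : h * (2*(B+1)) ≤ ε := by
      rw [le_div_iff₀ (by positivity)] at hd2; linarith
    nlinarith [mul_nonneg (by linarith : (0:ℝ) ≤ 1 - Real.exp (-h))
        (by linarith : (0:ℝ) ≤ B - Δ x),
      mul_nonneg (by linarith : (0:ℝ) ≤ h - (1 - Real.exp (-h))) hB,
      mul_le_mul_of_nonneg_left he1 (by linarith : (0:ℝ) ≤ ε/2)]
  -- integrability of the translated products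
  have hInt : ∀ (φ : SchwartzMap ℝ ℝ) (h : ℝ),
      Integrable (fun x : ℝ => Δ (x + h) * φ x) := by
    intro φ h
    apply (φ.integrable (μ := volume)).bdd_mul (c := B)
    · exact (hmeas.comp (measurable_add_const h)).aestronglyMeasurable
    · exact Filter.Eventually.of_forall (fun x => (Real.norm_eq_abs _) ▸ hbd _)
  rw [Metric.tendsto_atTop]
  intro ε hε
  obtain ⟨δ, hδ, x₀, H⟩ := hsd' (ε/3) (by linarith)
  -- bump functions
  set f₁ : ContDiffBump (δ/2) := ⟨δ/4, δ/2, by positivity, by linarith⟩ with hf₁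
  set f₂ : ContDiffBump (-(δ/2)) := ⟨δ/4, δ/2, by positivity, by linarith⟩ with hf₂
  set φ₁ : SchwartzMap ℝ ℝ :=
    mySchwartz (f₁.normed volume) f₁.contDiff_normed f₁.hasCompactSupport_normed with hφ₁
  set φ₂ : SchwartzMap ℝ ℝ :=
    mySchwartz (f₂.normed volume) f₂.contDiff_normed f₂.hasCompactSupport_normed with hφ₂
  have hiφ₁ : ∫ x : ℝ, φ₁ x = 1 := f₁.integral_normed
  have hiφ₂ : ∫ x : ℝ, φ₂ x = 1 := f₂.integral_normed
  have hw₁ := hweak φ₁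
  have hw₂ := hweak φ₂
  rw [hiφ₁, mul_one] at hw₁
  rw [hiφ₂, mul_one] at hw₂
  rw [Metric.tendsto_atTop] at hw₁ hw₂
  obtain ⟨N₁, hN₁⟩ := hw₁ (ε/3) (by linarith)
  obtain ⟨N₂, hN₂⟩ := hw₂ (ε/3) (by linarith)
  refine ⟨max (max N₁ N₂) (x₀ + δ), fun h hh => ?_⟩
  have hhN₁ : N₁ ≤ h := le_trans (le_trans (le_max_left _ _) (le_max_left _ _)) hh
  have hhN₂ : N₂ ≤ h := le_trans (le_trans (le_max_right _ _) (le_max_left _ _)) hh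
  have hhx₀ : x₀ + δ ≤ h := le_trans (le_max_right _ _) hh
  -- upper bound: ∫ Δ(x+h) φ₁ x ≥ Δ h - ε/3
  have hub : Δ h - ε/3 ≤ ∫ x : ℝ, Δ (x + h) * φ₁ x := by
    have hpt : ∀ x : ℝ, 0 ≤ (Δ (x + h) - (Δ h - ε/3)) * φ₁ x := by
      intro x
      rcases eq_or_ne (φ₁ x) 0 with h0 | h0
      · simp [h0]
      · have hx : x ∈ Metric.ball (δ/2) (δ/2) := by
          rw [← f₁.support_normed_eq (μ := volume)]
          exact h0
        rw [Real.ball_eq_Ioo] at hx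
        obtain ⟨hx1, hx2⟩ := hx
        have hx1' : (0:ℝ) < x := by linarith
        have hx2' : x ≤ δ := by linarith
        have := H h (by linarith) x hx1'.le hx2'
        rw [add_comm] at this
        exact mul_nonneg (by linarith) (f₁.nonneg_normed x)
    have hint0 : 0 ≤ ∫ x : ℝ, (Δ (x + h) - (Δ h - ε/3)) * φ₁ x := integral_nonneg hpt
    have heq : ∫ x : ℝ, (Δ (x + h) - (Δ h - ε/3)) * φ₁ x =
        (∫ x : ℝ, Δ (x + h) * φ₁ x) - (Δ h - ε/3) * ∫ x : ℝ, φ₁ x := by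
      rw [← integral_const_mul, ← integral_sub (hInt φ₁ h)]
      · congr 1; ext x; ring
      · exact (φ₁.integrable (μ := volume)).const_mul _
    rw [heq, hiφ₁, mul_one] at hint0
    linarith
  -- lower bound: ∫ Δ(x+h) φ₂ x ≤ Δ h + ε/3
  have hlb : (∫ x : ℝ, Δ (x + h) * φ₂ x) ≤ Δ h + ε/3 := by
    have hpt : ∀ x : ℝ, 0 ≤ ((Δ h + ε/3) - Δ (x + h)) * φ₂ x := by
      intro x
      rcases eq_or_ne (φ₂ x) 0 with h0 | h0
      · simp [h0]
      · have hx : x ∈ Metric.ball (-(δ/2)) (δ/2) := by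
          rw [← f₂.support_normed_eq (μ := volume)]
          exact h0
        rw [Real.ball_eq_Ioo] at hx
        obtain ⟨hx1, hx2⟩ := hx
        have hx1' : -δ < x := by linarith
        have hx2' : x < 0 := by linarith
        have := H (x + h) (by linarith) (-x) (by linarith) (by linarith)
        have heq : x + h + -x = h := by ring
        rw [heq] at this
        exact mul_nonneg (by linarith) (f₂.nonneg_normed x)
    have hint0 : 0 ≤ ∫ x : ℝ, ((Δ h + ε/3) - Δ (x + h)) * φ₂ x := integral_nonneg hpt
    have heq : ∫ x : ℝ, ((Δ h + ε/3) - Δ (x + h)) * φ₂ x =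
        (Δ h + ε/3) * (∫ x : ℝ, φ₂ x) - ∫ x : ℝ, Δ (x + h) * φ₂ x := by
      rw [← integral_const_mul, ← integral_sub ((φ₂.integrable (μ := volume)).const_mul _)
        (hInt φ₂ h)]
      congr 1; ext x; ring
    rw [heq, hiφ₂, mul_one] at hint0
    linarith
  have d₁ := hN₁ h hhN₁
  have d₂ := hN₂ h hhN₂
  rw [Real.dist_eq] at d₁ d₂ ⊢
  rw [abs_lt] at d₁ d₂ ⊢
  constructor <;> [nlinarith [d₂.1, d₂.2]; nlinarith [d₁.1, d₁.2]]
end
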